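/- arXiv:2010.01922 — 2 statements merged into one kernel-verified Lean document; each statement's English description precedes it below -/
import Mathlib

section
/- Let κ be an infinite regular cardinal, let S ⊆ S^{κ⁺}_κ be a set that contains a κ-club, and let T be any set of functions from ordinals below κ⁺ to κ⁺, ordered by proper end-extension. If there exists an order-preserving function f from T(S) to T (i.e., s ⊊ t implies f(s) ⊊ f(t) for all s, t ∈ T(S)), then T contains a chain of cardinality κ⁺. -/
open Set Cardinal

/-- The set `S^{κ⁺}_κ` of ordinals below `κ⁺` of cofinality `κ`. -/
def SCof (κ : Cardinal.{0}) : Set Ordinal.{0} :=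
  {γ | γ < (Order.succ κ).ord ∧ γ.cof = κ}

/-- `C` is a `κ`-club in `κ⁺`: it is an unbounded subset of `κ⁺` containing all of its
limit points (below `κ⁺`) of cofinality `κ`. -/
def IsKappaClub (κ : Cardinal.{0}) (C : Set Ordinal.{0}) : Prop :=
  C ⊆ Set.Iio (Order.succ κ).ord ∧
  (∀ α < (Order.succ κ).ord, ∃ β ∈ C, α < β) ∧
  (∀ α < (Order.succ κ).ord, α.cof = κ →
    (∀ β < α, ∃ γ ∈ C, β < γ ∧ γ < α) → α ∈ C)

/-- `g` (a set of pairs, i.e. the graph of a function) is a function from an ordinal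
below `κ⁺` to `κ⁺`. -/
def IsOrdFun (κ : Cardinal.{0}) (g : Set (Ordinal.{0} × Ordinal.{0})) : Prop :=
  ∃ d < (Order.succ κ).ord,
    (∀ x ∈ g, x.1 < d ∧ x.2 < (Order.succ κ).ord) ∧
    (∀ ξ < d, ∃! β, (ξ, β) ∈ g)

/-- The tree `T(S)`, whose nodes are (graphs of) strictly increasing functions from a
successor ordinal below `κ⁺` into `S` that are continuous at all points of cofinality
`κ` in their domain; the tree ordering is end-extension, i.e. inclusion of graphs. -/
def TStree (κ : Cardinal.{0}) (S : Set Ordinal.{0}) :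
    Set (Set (Ordinal.{0} × Ordinal.{0})) :=
  {g | ∃ d, d < (Order.succ κ).ord ∧ (∃ e, d = Order.succ e) ∧
    (∀ x ∈ g, x.1 < d) ∧ (∀ ξ < d, ∃! β, (ξ, β) ∈ g) ∧
    (∀ x ∈ g, x.2 ∈ S) ∧
    (∀ ξ β η β', (ξ, β) ∈ g → (η, β') ∈ g → ξ < η → β < β') ∧
    (∀ ξ β, (ξ, β) ∈ g → ξ.cof = κ → β = sSup {β' | ∃ η < ξ, (η, β') ∈ g})}

/-!
Enumerate the κ-club `C` increasingly as `e : κ⁺ → C`. Since `κ⁺` is regular, `e` stays below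
`κ⁺`; at a point `ξ` of cofinality `κ` the supremum of `e` below `ξ` again has cofinality `κ`
and is a limit of points of `C`, so it lies in `C` and equals `e ξ`. Hence every initial segment
`e ↾ (α + 1)` is a node of `T(S)`, these nodes form a branch of length `κ⁺`, and the
order-preserving map `f` sends this branch to a chain of size `κ⁺` in `T`.
-/

open Ordinal

theorem MonotoneOn.isChain_image {α β : Type*} [LinearOrder α] [Preorder β] {f : α → β}
    {s : Set α} (hf : MonotoneOn f s) : IsChain (· ≤ ·) (f '' s) := by
  rintro _ ⟨a, ha, rfl⟩ _ ⟨b, hb, rfl⟩ -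
  rcases le_total a b with hab | hba
  · exact Or.inl (hf ha hb hab)
  · exact Or.inr (hf hb ha hba)

theorem Set.graphOn_Iic_ssubset_graphOn_Iic {α β : Type*} [Preorder α] (e : α → β) {a b : α}
    (hab : a < b) : (Iic a).graphOn e ⊂ (Iic b).graphOn e :=
  (Function.LeftInverse.injective (g := Prod.fst) fun _ => rfl).image_strictMono
    (Iic_ssubset_Iic.2 hab)

namespace Ordinal

theorem cof_sSup_image_Iio {e : Ordinal.{u} → Ordinal.{u}} (he : StrictMono e) {ξ : Ordinal.{u}}
    (hξ : Order.IsSuccPrelimit ξ) : (sSup (e '' Iio ξ)).cof = ξ.cof := by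
  rw [sSup_image']
  exact cof_iSup_Iio (he.comp (Subtype.strictMono_coe _)) hξ

theorem sSup_image_Iio_lt_ord {c : Cardinal.{u}} (hc : c.IsRegular) {e : Ordinal.{u} → Ordinal.{u}}
    {ξ : Ordinal.{u}} (hξ : ξ < c.ord) (he : ∀ η < ξ, e η < c.ord) : sSup (e '' Iio ξ) < c.ord := by
  refine sSup_lt_of_lt_cof ?_ (forall_mem_image.2 he)
  rw [← lift_cof, hc.cof_ord]
  calc #(e '' Iio ξ) ≤ #(Iio ξ) := mk_image_le
    _ = Cardinal.lift ξ.card := Cardinal.mk_Iio_ordinal ξ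
    _ < Cardinal.lift c := Cardinal.lift_lt.2 (lt_ord.1 hξ)

theorem le_sSup_image_Iio (e : Ordinal.{u} → Ordinal.{u}) {ξ η : Ordinal.{u}} (hη : η < ξ) :
    e η ≤ sSup (e '' Iio ξ) :=
  le_csSup bddAbove_of_small (mem_image_of_mem e hη)

theorem not_bddAbove_union_Ici (C : Set Ordinal.{u}) (o : Ordinal.{u}) : ¬ BddAbove (C ∪ Ici o) :=
  fun h => not_bddAbove_Ici o (h.mono subset_union_right)

theorem enumOrd_eq_sSup_image_Iio {s : Set Ordinal.{u}} (hs : ¬ BddAbove s) {ξ : Ordinal.{u}}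
    (hξ : Order.IsSuccLimit ξ) (hmem : sSup (enumOrd s '' Iio ξ) ∈ s) :
    enumOrd s ξ = sSup (enumOrd s '' Iio ξ) := by
  have he := enumOrd_strictMono hs
  refine le_antisymm (enumOrd_le_of_forall_lt hmem fun η hη => ?_) ?_
  · exact (he (Order.lt_succ η)).trans_le (le_sSup_image_Iio _ (hξ.succ_lt hη))
  · exact csSup_le (hξ.nonempty_Iio.image _) (forall_mem_image.2 fun η hη => (he hη).le)

/-- Padding `C` with `Ici c.ord` makes it unbounded, so that `enumOrd` enumerates `C` below
`c.ord`. -/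
theorem enumOrd_union_Ici_mem {C : Set Ordinal.{u}} {c : Cardinal.{u}} (hc : c.IsRegular)
    (hCsub : C ⊆ Iio c.ord) (hCunb : ∀ α < c.ord, ∃ β ∈ C, α < β) {α : Ordinal.{u}}
    (hα : α < c.ord) : enumOrd (C ∪ Ici c.ord) α ∈ C := by
  induction α using WellFoundedLT.induction with
  | ind α IH =>
  have hsup := sSup_image_Iio_lt_ord hc hα fun η hη => hCsub (IH η hη (hη.trans hα))
  obtain ⟨β, hβC, hβ⟩ := hCunb _ hsup
  have hle : enumOrd (C ∪ Ici c.ord) α ≤ β := enumOrd_le_of_forall_lt (Or.inl hβC) fun η hη =>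
    (le_sSup_image_Iio _ hη).trans_lt hβ
  exact (enumOrd_mem (not_bddAbove_union_Ici C c.ord) α).resolve_right
    (not_le.2 (hle.trans_lt (hCsub hβC)))

end Ordinal

namespace IsKappaClub

variable {κ : Cardinal.{0}} {C : Set Ordinal.{0}}

theorem enumOrd_mem (hκ : ℵ₀ ≤ κ) (hC : IsKappaClub κ C) {α : Ordinal.{0}}
    (hα : α < (Order.succ κ).ord) : enumOrd (C ∪ Ici (Order.succ κ).ord) α ∈ C :=
  enumOrd_union_Ici_mem (isRegular_succ hκ) hC.1 hC.2.1 hα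

theorem enumOrd_eq_sSup (hκ : ℵ₀ ≤ κ) (hC : IsKappaClub κ C) {ξ : Ordinal.{0}}
    (hξ : ξ < (Order.succ κ).ord) (hcof : ξ.cof = κ) :
    enumOrd (C ∪ Ici (Order.succ κ).ord) ξ =
      sSup (enumOrd (C ∪ Ici (Order.succ κ).ord) '' Iio ξ) := by
  set e := enumOrd (C ∪ Ici (Order.succ κ).ord)
  have hs := not_bddAbove_union_Ici C (Order.succ κ).ord
  have hξlim : Order.IsSuccLimit ξ := one_lt_cof_iff.1 (hcof ▸ (one_lt_aleph0.trans_le hκ))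
  have hne : (e '' Iio ξ).Nonempty := hξlim.nonempty_Iio.image e
  have hlt : sSup (e '' Iio ξ) < (Order.succ κ).ord := sSup_image_Iio_lt_ord (isRegular_succ hκ) hξ
    fun η hη => hC.1 (hC.enumOrd_mem hκ (hη.trans hξ))
  have hsup_cof : (sSup (e '' Iio ξ)).cof = κ := by
    rw [cof_sSup_image_Iio (enumOrd_strictMono hs) hξlim.isSuccPrelimit, hcof]
  refine enumOrd_eq_sSup_image_Iio hs hξlim (Or.inl (hC.2.2 _ hlt hsup_cof fun β hβ => ?_))
  obtain ⟨_, ⟨η, hη, rfl⟩, hβη⟩ := exists_lt_of_lt_csSup hne hβ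
  exact ⟨e η, hC.enumOrd_mem hκ (hη.trans hξ), hβη,
    (enumOrd_strictMono hs (Order.lt_succ η)).trans_le (le_sSup_image_Iio e (hξlim.succ_lt hη))⟩

end IsKappaClub

theorem graphOn_Iic_mem_TStree {κ : Cardinal.{0}} {S : Set Ordinal.{0}}
    {e : Ordinal.{0} → Ordinal.{0}} (he : StrictMono e) {α : Ordinal.{0}}
    (hα : Order.succ α < (Order.succ κ).ord) (hS : ∀ ξ ≤ α, e ξ ∈ S)
    (hcont : ∀ ξ ≤ α, ξ.cof = κ → e ξ = sSup (e '' Iio ξ)) :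
    (Iic α).graphOn e ∈ TStree κ S := by
  refine ⟨Order.succ α, hα, ⟨α, rfl⟩, ?_, fun ξ hξ => ?_, ?_, ?_, ?_⟩
  · rintro ⟨ξ, β⟩ hξ
    exact Order.lt_succ_iff.2 (mem_graphOn.1 hξ).1
  · exact ⟨e ξ, mem_graphOn.2 ⟨Order.lt_succ_iff.1 hξ, rfl⟩, fun β hβ => (mem_graphOn.1 hβ).2.symm⟩
  · rintro ⟨ξ, β⟩ hξ
    simp only [mem_graphOn] at hξ
    obtain ⟨hξα, rfl⟩ := hξ
    exact hS ξ hξα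
  · intro ξ β η β' hξ hη hξη
    simp only [mem_graphOn] at hξ hη
    obtain ⟨-, rfl⟩ := hξ
    obtain ⟨-, rfl⟩ := hη
    exact he hξη
  · intro ξ β hξ hcof
    simp only [mem_graphOn] at hξ
    obtain ⟨hξα, rfl⟩ := hξ
    have hvals : {β' | ∃ η < ξ, (η, β') ∈ (Iic α).graphOn e} = e '' Iio ξ := by
      ext β'
      simp only [mem_ofPred_eq, mem_graphOn, mem_Iic, mem_image, mem_Iio]
      exact exists_congr fun η => ⟨fun ⟨hη, _, h⟩ => ⟨hη, h⟩,
        fun ⟨hη, h⟩ => ⟨hη, (hη.trans_le hξα).le, h⟩⟩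
    rw [hvals]
    exact hcont ξ hξα hcof

theorem statement6_general (κ : Cardinal.{0}) (hκ : ℵ₀ ≤ κ)
    (S : Set Ordinal.{0})
    (hclub : ∃ C : Set Ordinal.{0}, IsKappaClub κ C ∧ C ⊆ S)
    (T : Set (Set (Ordinal.{0} × Ordinal.{0})))
    (f : Set (Ordinal.{0} × Ordinal.{0}) → Set (Ordinal.{0} × Ordinal.{0}))
    (hfT : ∀ g ∈ TStree κ S, f g ∈ T)
    (hfmono : ∀ g ∈ TStree κ S, ∀ h ∈ TStree κ S, g ⊂ h → f g ⊂ f h) :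
    ∃ c ⊆ T, IsChain (· ⊆ ·) c ∧ #c = Cardinal.lift.{1} (Order.succ κ) := by
  obtain ⟨C, hC, hCS⟩ := hclub
  set e := enumOrd (C ∪ Ici (Order.succ κ).ord)
  have hbranch : ∀ α < (Order.succ κ).ord, (Iic α).graphOn e ∈ TStree κ S := fun α hα =>
    graphOn_Iic_mem_TStree (enumOrd_strictMono (not_bddAbove_union_Ici C _))
      ((isSuccLimit_ord (hκ.trans (Order.le_succ κ))).succ_lt hα)
      (fun ξ hξ => hCS (hC.enumOrd_mem hκ (hξ.trans_lt hα)))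
      (fun ξ hξ => hC.enumOrd_eq_sSup hκ (hξ.trans_lt hα))
  set F := fun α => f ((Iic α).graphOn e)
  have hF : StrictMonoOn F (Iio (Order.succ κ).ord) := fun α hα β hβ hαβ =>
    hfmono _ (hbranch α hα) _ (hbranch β hβ) (graphOn_Iic_ssubset_graphOn_Iic e hαβ)
  refine ⟨F '' Iio (Order.succ κ).ord, image_subset_iff.2 fun α hα => hfT _ (hbranch α hα),
    hF.monotoneOn.isChain_image, ?_⟩
  rw [mk_image_eq_of_injOn _ _ hF.injOn, Cardinal.mk_Iio_ordinal, card_ord]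

/-- If `S ⊆ S^{κ⁺}_κ` contains a `κ`-club and there is an order-preserving function `f`
from `T(S)` into a set `T` of functions from ordinals below `κ⁺` to `κ⁺` (ordered by
proper end-extension, i.e. proper inclusion of graphs), then `T` contains a chain of
cardinality `κ⁺`. -/
theorem statement6 (κ : Cardinal.{0}) (hκ : ℵ₀ ≤ κ) (hreg : κ.IsRegular)
    (S : Set Ordinal.{0}) (hS : S ⊆ SCof κ)
    (hclub : ∃ C : Set Ordinal.{0}, IsKappaClub κ C ∧ C ⊆ S)
    (T : Set (Set (Ordinal.{0} × Ordinal.{0}))) (hT : ∀ g ∈ T, IsOrdFun κ g)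
    (f : Set (Ordinal.{0} × Ordinal.{0}) → Set (Ordinal.{0} × Ordinal.{0}))
    (hfT : ∀ g ∈ TStree κ S, f g ∈ T)
    (hfmono : ∀ g ∈ TStree κ S, ∀ h ∈ TStree κ S, g ⊂ h → f g ⊂ f h) :
    ∃ c ⊆ T, IsChain (· ⊆ ·) c ∧ #c = Cardinal.lift.{1} (Order.succ κ) :=
  statement6_general κ hκ S hclub T f hfT hfmono
end

section
/- Let κ be an infinite regular cardinal, let M ⊆ S^{κ⁺}_κ be stationary in κ⁺, and let T be a set of functions from ordinals below κ⁺ to κ⁺, ordered by proper end-extension, that contains no chain of cardinality κ⁺. Assume that for every A ⊆ M that is stationary in κ⁺ and for which no club C ⊆ κ⁺ satisfies C ∩ M ⊆ A, there exists an order-preserving function from T(S^{κ⁺}_κ \ A) to T. Then for every A ⊆ M, the set A is stationary in κ⁺ if and only if either there exists a club C ⊆ κ⁺ with C ∩ M ⊆ A, or there exists an order-preserving function from T(S^{κ⁺}_κ \ A) to T. -/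
/-!
If `A` is not stationary, fix a club `C` disjoint from `A` and climb through the points of `C`
of cofinality `κ`, taking suprema at stages of cofinality `κ`. The result is strictly increasing,
continuous at stages of cofinality `κ` and avoids `A`, so its initial segments form a chain of
length `κ⁺` in `T(S^{κ⁺}_κ \ A)`; an order-preserving map into `T` would carry it to a chain of
size `κ⁺` in `T`. The other implications are the hypothesis on embeddings and the closure of clubs
in `κ⁺` under intersection.
-/

open Set Cardinal

/-- `C` is a closed unbounded subset of the ordinal `δ`. -/
def IsClubIn (δ : Ordinal.{0}) (C : Set Ordinal.{0}) : Prop :=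
  C ⊆ Set.Iio δ ∧
  (∀ α < δ, ∃ β ∈ C, α < β) ∧
  (∀ α < δ, 0 < α → (∀ β < α, ∃ γ ∈ C, β < γ ∧ γ < α) → α ∈ C)

/-- `S` is stationary in `δ`: it meets every club subset of `δ`. -/
def IsStationaryIn (δ : Ordinal.{0}) (S : Set Ordinal.{0}) : Prop :=
  ∀ C, IsClubIn δ C → (S ∩ C).Nonempty

/-- `f` is an order-preserving function from `T(S^{κ⁺}_κ \ A)` to `T` (both ordered by
proper end-extension, i.e. proper inclusion of graphs). -/
def OrderPresInto (κ : Cardinal.{0}) (A : Set Ordinal.{0})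
    (T : Set (Set (Ordinal.{0} × Ordinal.{0})))
    (f : Set (Ordinal.{0} × Ordinal.{0}) → Set (Ordinal.{0} × Ordinal.{0})) : Prop :=
  (∀ g ∈ TStree κ (SCof κ \ A), f g ∈ T) ∧
  (∀ g ∈ TStree κ (SCof κ \ A), ∀ h ∈ TStree κ (SCof κ \ A), g ⊂ h → f g ⊂ f h)

open Order

universe u

def IsUnboundedIn (δ : Ordinal.{u}) (E : Set Ordinal.{u}) : Prop :=
  E ⊆ Iio δ ∧ ∀ α < δ, ∃ β ∈ E, α < β

theorem IsClubIn.iSup_mem {δ : Ordinal.{0}} {C : Set Ordinal.{0}} (hC : IsClubIn δ C)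
    {ι : Type*} [Nonempty ι] [Small.{0} ι] {f : ι → Ordinal.{0}} (hfC : ∀ i, f i ∈ C)
    (hf : ∀ i, f i < ⨆ i, f i) (hδ : ⨆ i, f i < δ) : ⨆ i, f i ∈ C := by
  refine hC.2.2 _ hδ (zero_le.trans_lt (hf (Classical.arbitrary ι))) fun β hβ => ?_
  obtain ⟨i, hi⟩ := Ordinal.lt_iSup_iff.1 hβ
  exact ⟨f i, hfC i, hi, hf i⟩

theorem IsClubIn.inter {δ : Ordinal.{0}} (hδ : ℵ₀ < δ.cof) {C D : Set Ordinal.{0}}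
    (hC : IsClubIn δ C) (hD : IsClubIn δ D) : IsClubIn δ (C ∩ D) := by
  refine ⟨fun x hx => hC.1 hx.1, fun α hα => ?_, fun α hα hpos h => ⟨?_, ?_⟩⟩
  · choose! nextC hnextC using hC.2.1
    choose! nextD hnextD using hD.2.1
    -- `x n < y n < x (n + 1)` with `y n ∈ C` and `x (n + 1) ∈ D`: the common supremum lies in both.
    let x : ℕ → Ordinal.{0} := fun n => (nextD ∘ nextC)^[n] α
    let y : ℕ → Ordinal.{0} := fun n => nextC (x n)
    have hstep : ∀ n, x n < δ → (y n ∈ C ∧ x n < y n) ∧ (x (n + 1) ∈ D ∧ y n < x (n + 1)) := by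
      intro n hn
      obtain ⟨hyC, hxy⟩ := hnextC _ hn
      rw [show x (n + 1) = nextD (y n) from Function.iterate_succ_apply' _ n α]
      exact ⟨⟨hyC, hxy⟩, hnextD _ (hC.1 hyC)⟩
    have hxδ : ∀ n, x n < δ := by
      intro n
      induction n with
      | zero => exact hα
      | succ n ih => exact hD.1 (hstep n ih).2.1
    choose hyC hxy using fun n => (hstep n (hxδ n)).1
    choose hxD hyx using fun n => (hstep n (hxδ n)).2
    have hsup : ⨆ n, x (n + 1) = ⨆ n, y n :=
      le_antisymm (Ordinal.iSup_le fun n => (hxy (n + 1)).le.trans (Ordinal.le_iSup y (n + 1)))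
        (Ordinal.iSup_le fun n => (hyx n).le.trans (Ordinal.le_iSup (fun n => x (n + 1)) n))
    have hyδ : ⨆ n, y n < δ :=
      Ordinal.iSup_lt_of_lt_cof (by rwa [mk_nat]) fun n => hC.1 (hyC n)
    refine ⟨⨆ n, y n, ⟨?_, ?_⟩, (hxy 0).trans_le (Ordinal.le_iSup y 0)⟩
    · exact hC.iSup_mem hyC
        (fun n => ((hyx n).trans (hxy (n + 1))).trans_le (Ordinal.le_iSup y (n + 1))) hyδ
    · rw [← hsup] at hyδ ⊢
      exact hD.iSup_mem hxD (fun n => ((hxy (n + 1)).trans (hyx (n + 1))).trans_le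
        (Ordinal.le_iSup (fun n => x (n + 1)) (n + 1))) hyδ
  · exact hC.2.2 α hα hpos fun β hβ => (h β hβ).imp fun γ ⟨hγ, hlt⟩ => ⟨hγ.1, hlt⟩
  · exact hD.2.2 α hα hpos fun β hβ => (h β hβ).imp fun γ ⟨hγ, hlt⟩ => ⟨hγ.2, hlt⟩

theorem IsStationaryIn.of_isClubIn_inter_subset {δ : Ordinal.{0}} (hδ : ℵ₀ < δ.cof)
    {M C A : Set Ordinal.{0}} (hM : IsStationaryIn δ M) (hC : IsClubIn δ C) (hCMA : C ∩ M ⊆ A) :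
    IsStationaryIn δ A := fun _ hD =>
  (hM _ (hC.inter hδ hD)).mono fun _ hx => ⟨hCMA ⟨hx.2.1, hx.1⟩, hx.2.2⟩

theorem iSup_Iio_lt_ord {ν : Cardinal.{u}} (hν : ν.IsRegular) {ξ : Ordinal.{u}} (hξ : ξ < ν.ord)
    {f : Iio ξ → Ordinal.{u}} (hf : ∀ η, f η < ν.ord) : ⨆ η, f η < ν.ord := by
  apply Ordinal.lift_iSup_lt_of_lt_cof _ hf
  rwa [← Ordinal.lift_cof, hν.cof_ord, Cardinal.mk_Iio_ordinal, lift_lift, lift_lt, ← lt_ord]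

/-- Since `sInf ∅ = 0`, this is only meaningful while `E` has elements above all earlier values,
e.g. below `ν.ord` for `E` unbounded in `ν.ord` with `ν` regular. -/
noncomputable def climb (κ : Cardinal.{u}) (E : Set Ordinal.{u}) (ξ : Ordinal.{u}) : Ordinal.{u} :=
  if ξ.cof = κ then ⨆ η : Iio ξ, climb κ E η
  else sInf {γ ∈ E | ⨆ η : Iio ξ, climb κ E η < γ}
termination_by ξ
decreasing_by all_goals exact η.2

section Climb

variable {κ ν : Cardinal.{u}} {E : Set Ordinal.{u}} {ξ : Ordinal.{u}}

theorem climb_of_cof_eq (h : ξ.cof = κ) : climb κ E ξ = ⨆ η : Iio ξ, climb κ E η := by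
  rw [climb, if_pos h]

theorem climb_mem_and_iSup_lt_of_cof_ne (hE : IsUnboundedIn ν.ord E) (h : ξ.cof ≠ κ)
    (hξ : ⨆ η : Iio ξ, climb κ E η < ν.ord) :
    climb κ E ξ ∈ E ∧ ⨆ η : Iio ξ, climb κ E η < climb κ E ξ := by
  rw [climb, if_neg h]
  exact csInf_mem (hE.2 _ hξ)

theorem climb_lt_ord_and_lt (hκ : 1 < κ) (hν : ν.IsRegular) (hE : IsUnboundedIn ν.ord E) :
    ∀ ξ < ν.ord, climb κ E ξ < ν.ord ∧ ∀ η < ξ, climb κ E η < climb κ E ξ := by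
  intro ξ
  induction ξ using WellFoundedLT.induction with | _ ξ IH =>
  intro hξ
  have hsup : ⨆ η : Iio ξ, climb κ E η < ν.ord :=
    iSup_Iio_lt_ord hν hξ fun η => (IH η η.2 (η.2.trans hξ)).1
  by_cases hcof : ξ.cof = κ
  · have hlim : IsSuccLimit ξ := Ordinal.one_lt_cof_iff.1 (hcof ▸ hκ)
    rw [climb_of_cof_eq hcof]
    refine ⟨hsup, fun η hη => ?_⟩
    have hη' : succ η < ξ := hlim.succ_lt hη
    exact ((IH _ hη' (hη'.trans hξ)).2 η (lt_succ η)).trans_le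
      (Ordinal.le_iSup (fun η : Iio ξ => climb κ E η) ⟨succ η, hη'⟩)
  · obtain ⟨hmem, hlt⟩ := climb_mem_and_iSup_lt_of_cof_ne hE hcof hsup
    exact ⟨hE.1 hmem, fun η hη =>
      (Ordinal.le_iSup (fun η : Iio ξ => climb κ E η) ⟨η, hη⟩).trans_lt hlt⟩

theorem strictMonoOn_climb (hκ : 1 < κ) (hν : ν.IsRegular) (hE : IsUnboundedIn ν.ord E) :
    StrictMonoOn (climb κ E) (Iio ν.ord) := fun _ _ ξ hξ hlt =>
  (climb_lt_ord_and_lt hκ hν hE ξ hξ).2 _ hlt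

theorem climb_mem_of_cof_ne (hκ : 1 < κ) (hν : ν.IsRegular) (hE : IsUnboundedIn ν.ord E)
    (hξ : ξ < ν.ord) (h : ξ.cof ≠ κ) : climb κ E ξ ∈ E :=
  (climb_mem_and_iSup_lt_of_cof_ne hE h
    (iSup_Iio_lt_ord hν hξ fun η => (climb_lt_ord_and_lt hκ hν hE η (η.2.trans hξ)).1)).1

theorem cof_climb_of_cof_eq (hκ : 1 < κ) (hν : ν.IsRegular) (hE : IsUnboundedIn ν.ord E)
    (hξ : ξ < ν.ord) (h : ξ.cof = κ) : (climb κ E ξ).cof = κ := by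
  have hlim : IsSuccLimit ξ := Ordinal.one_lt_cof_iff.1 (h ▸ hκ)
  rw [climb_of_cof_eq h, Ordinal.cof_iSup_Iio _ hlim.isSuccPrelimit, h]
  exact fun η η' hlt => strictMonoOn_climb hκ hν hE (η.2.trans hξ) (η'.2.trans hξ) hlt

end Climb

theorem IsClubIn.climb_mem {κ ν : Cardinal.{0}} {C E : Set Ordinal.{0}} (hκ : 1 < κ)
    (hν : ν.IsRegular) (hC : IsClubIn ν.ord C) (hE : IsUnboundedIn ν.ord E) (hEC : E ⊆ C) :
    ∀ ξ < ν.ord, climb κ E ξ ∈ C := by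
  intro ξ
  induction ξ using WellFoundedLT.induction with | _ ξ IH =>
  intro hξ
  by_cases hcof : ξ.cof = κ
  · have hlim : IsSuccLimit ξ := Ordinal.one_lt_cof_iff.1 (hcof ▸ hκ)
    have : Nonempty (Iio ξ) := ⟨⟨0, hlim.bot_lt⟩⟩
    have hmono := strictMonoOn_climb hκ hν hE
    rw [climb_of_cof_eq hcof]
    refine hC.iSup_mem (fun η => IH η η.2 (η.2.trans hξ)) (fun η => ?_)
      (iSup_Iio_lt_ord hν hξ fun η => (climb_lt_ord_and_lt hκ hν hE η (η.2.trans hξ)).1)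
    have hη' : succ η.1 < ξ := hlim.succ_lt η.2
    exact (hmono (η.2.trans hξ) (hη'.trans hξ) (lt_succ η.1)).trans_le
      (Ordinal.le_iSup (fun η : Iio ξ => climb κ E η) ⟨succ η.1, hη'⟩)
  · exact hEC (climb_mem_of_cof_ne hκ hν hE hξ hcof)

theorem IsClubIn.exists_cof_eq_gt {κ ν : Cardinal.{0}} {C : Set Ordinal.{0}} (hκ : κ.IsRegular)
    (hν : ν.IsRegular) (hκν : κ < ν) (hC : IsClubIn ν.ord C) {α : Ordinal.{0}} (hα : α < ν.ord) :
    ∃ γ ∈ C, γ.cof = κ ∧ α < γ := by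
  have hE : IsUnboundedIn ν.ord (C ∩ Ioi α) := by
    refine ⟨fun _ hγ => hC.1 hγ.1, fun β hβ => ?_⟩
    obtain ⟨γ, hγC, hγ⟩ := hC.2.1 (max α β) (max_lt hα hβ)
    exact ⟨γ, ⟨hγC, (le_max_left α β).trans_lt hγ⟩, (le_max_right α β).trans_lt hγ⟩
  have hone : 1 < κ := one_lt_aleph0.trans_le hκ.aleph0_le
  have hκν' : κ.ord < ν.ord := ord_lt_ord.2 hκν
  have h0 : (0 : Ordinal).cof ≠ κ := by rw [Ordinal.cof_zero]; exact hκ.ne_zero.symm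
  refine ⟨climb κ (C ∩ Ioi α) κ.ord, hC.climb_mem hone hν hE inter_subset_left _ hκν',
    cof_climb_of_cof_eq hone hν hE hκν' hκ.cof_ord, ?_⟩
  exact (climb_mem_of_cof_ne hone hν hE (hκ.ord_pos.trans hκν') h0).2.trans
    (strictMonoOn_climb hone hν hE (hκ.ord_pos.trans hκν') hκν' hκ.ord_pos)

def graphUpTo (t : Ordinal.{0} → Ordinal.{0}) (a : Ordinal.{0}) : Set (Ordinal.{0} × Ordinal.{0}) :=
  {p | p.1 ≤ a ∧ p.2 = t p.1}

theorem graphUpTo_strictMono (t : Ordinal.{0} → Ordinal.{0}) : StrictMono (graphUpTo t) := by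
  intro a b hab
  refine ssubset_iff_subset_ne.2 ⟨fun p hp => ⟨hp.1.trans hab.le, hp.2⟩, fun h => ?_⟩
  have hb : (b, t b) ∈ graphUpTo t a := h ▸ ⟨le_rfl, rfl⟩
  exact hb.1.not_gt hab

theorem graphUpTo_mem_TStree {κ : Cardinal.{0}} (hκ : ℵ₀ ≤ κ) {S : Set Ordinal.{0}}
    {t : Ordinal.{0} → Ordinal.{0}} (htS : ∀ ξ < (succ κ).ord, t ξ ∈ S)
    (ht : StrictMonoOn t (Iio (succ κ).ord))
    (htcont : ∀ ξ < (succ κ).ord, ξ.cof = κ → t ξ = ⨆ η : Iio ξ, t η)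
    {a : Ordinal.{0}} (ha : a < (succ κ).ord) : graphUpTo t a ∈ TStree κ S := by
  have hlim : IsSuccLimit (succ κ).ord := isSuccLimit_ord (hκ.trans (le_succ κ))
  refine ⟨succ a, hlim.succ_lt ha, ⟨a, rfl⟩, fun p hp => lt_succ_iff.2 hp.1,
    fun ξ hξ => ⟨t ξ, ⟨lt_succ_iff.1 hξ, rfl⟩, fun β hβ => hβ.2⟩, ?_, ?_, ?_⟩
  · rintro ⟨ξ, β⟩ ⟨hξ, (rfl : β = t ξ)⟩
    exact htS ξ (hξ.trans_lt ha)
  · rintro ξ _ η _ ⟨-, (rfl : _ = t ξ)⟩ ⟨hη, (rfl : _ = t η)⟩ hlt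
    exact ht ((hlt.trans_le hη).trans ha) (hη.trans_lt ha) hlt
  · rintro ξ _ ⟨hξ, (rfl : _ = t ξ)⟩ hcof
    have hset : {β | ∃ η < ξ, (η, β) ∈ graphUpTo t a} = range fun η : Iio ξ => t η := by
      ext β
      constructor
      · rintro ⟨η, hη, -, (rfl : _ = t η)⟩
        exact ⟨⟨η, hη⟩, rfl⟩
      · rintro ⟨η, rfl⟩
        exact ⟨η, η.2, η.2.le.trans hξ, rfl⟩
    rw [hset]
    exact htcont ξ (hξ.trans_lt ha) hcof

theorem exists_strictMono_TStree_of_not_isStationaryIn {κ : Cardinal.{0}} (hκ : κ.IsRegular)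
    {A : Set Ordinal.{0}} (hA : ¬ IsStationaryIn (succ κ).ord A) :
    ∃ F : Iio (succ κ).ord → Set (Ordinal.{0} × Ordinal.{0}),
      StrictMono F ∧ ∀ a, F a ∈ TStree κ (SCof κ \ A) := by
  simp only [IsStationaryIn, not_forall, not_nonempty_iff_eq_empty] at hA
  obtain ⟨C, hC, hAC⟩ := hA
  have hκ' := isRegular_succ hκ.aleph0_le
  set E := {γ ∈ C | γ.cof = κ}
  have hE : IsUnboundedIn (succ κ).ord E := by
    refine ⟨fun γ hγ => hC.1 hγ.1, fun α hα => ?_⟩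
    obtain ⟨γ, hγC, hγ, hαγ⟩ := hC.exists_cof_eq_gt hκ hκ' (lt_succ κ) hα
    exact ⟨γ, ⟨hγC, hγ⟩, hαγ⟩
  have hone : 1 < κ := one_lt_aleph0.trans_le hκ.aleph0_le
  have hS : ∀ ξ < (succ κ).ord, climb κ E ξ ∈ SCof κ \ A := by
    intro ξ hξ
    have hcof : (climb κ E ξ).cof = κ := by
      by_cases h : ξ.cof = κ
      · exact cof_climb_of_cof_eq hone hκ' hE hξ h
      · exact (climb_mem_of_cof_ne hone hκ' hE hξ h).2
    have hC' : climb κ E ξ ∈ C := hC.climb_mem hone hκ' hE (fun _ hγ => hγ.1) ξ hξ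
    exact ⟨⟨hC.1 hC', hcof⟩, fun hA => (eq_empty_iff_forall_notMem.1 hAC _) ⟨hA, hC'⟩⟩
  exact ⟨fun a => graphUpTo (climb κ E) a, fun _ _ hab => graphUpTo_strictMono _ hab,
    fun a => graphUpTo_mem_TStree hκ.aleph0_le hS (strictMonoOn_climb hone hκ' hE)
      (fun ξ _ h => climb_of_cof_eq h) a.2⟩

theorem statement7_general (κ : Cardinal.{0}) (hreg : κ.IsRegular)
    (M : Set Ordinal.{0})
    (hMstat : IsStationaryIn (Order.succ κ).ord M)
    (T : Set (Set (Ordinal.{0} × Ordinal.{0})))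
    (hnochain : ¬ ∃ c ⊆ T, IsChain (· ⊆ ·) c ∧ #c = Cardinal.lift.{1} (Order.succ κ))
    (hembed : ∀ A ⊆ M, IsStationaryIn (Order.succ κ).ord A →
      ¬ (∃ C, IsClubIn (Order.succ κ).ord C ∧ C ∩ M ⊆ A) →
      ∃ f, OrderPresInto κ A T f) :
    ∀ A ⊆ M, (IsStationaryIn (Order.succ κ).ord A ↔
      ((∃ C, IsClubIn (Order.succ κ).ord C ∧ C ∩ M ⊆ A) ∨
        ∃ f, OrderPresInto κ A T f)) := by
  intro A hAM
  refine ⟨fun hA => or_iff_not_imp_left.2 (hembed A hAM hA), ?_⟩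
  rintro (⟨C, hC, hCMA⟩ | ⟨f, hfT, hf⟩)
  · have hδ : ℵ₀ < (succ κ).ord.cof := by
      rw [(isRegular_succ hreg.aleph0_le).cof_ord]
      exact hreg.aleph0_le.trans_lt (lt_succ κ)
    exact hMstat.of_isClubIn_inter_subset hδ hC hCMA
  · by_contra hA
    obtain ⟨F, hF, hFT⟩ := exists_strictMono_TStree_of_not_isStationaryIn hreg hA
    have hfF : StrictMono (f ∘ F) := fun a b hab => hf _ (hFT a) _ (hFT b) (hF hab)
    refine hnochain ⟨range (f ∘ F), range_subset_iff.2 fun a => hfT _ (hFT a),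
      hfF.monotone.isChain_range, ?_⟩
    rw [mk_range_eq _ hfF.injective, mk_Iio_ordinal, card_ord]

theorem statement7 (κ : Cardinal.{0}) (hκ : ℵ₀ ≤ κ) (hreg : κ.IsRegular)
    (M : Set Ordinal.{0}) (hMsub : M ⊆ SCof κ)
    (hMstat : IsStationaryIn (Order.succ κ).ord M)
    (T : Set (Set (Ordinal.{0} × Ordinal.{0}))) (hT : ∀ g ∈ T, IsOrdFun κ g)
    (hnochain : ¬ ∃ c ⊆ T, IsChain (· ⊆ ·) c ∧ #c = Cardinal.lift.{1} (Order.succ κ))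
    (hembed : ∀ A ⊆ M, IsStationaryIn (Order.succ κ).ord A →
      ¬ (∃ C, IsClubIn (Order.succ κ).ord C ∧ C ∩ M ⊆ A) →
      ∃ f, OrderPresInto κ A T f) :
    ∀ A ⊆ M, (IsStationaryIn (Order.succ κ).ord A ↔
      ((∃ C, IsClubIn (Order.succ κ).ord C ∧ C ∩ M ⊆ A) ∨
        ∃ f, OrderPresInto κ A T f)) :=
  statement7_general κ hreg M hMstat T hnochain hembed
end
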